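/- Let N and M be natural numbers with N > 0. Then the sum, over all functions f : Fin M → Fin N, of the number of collisions M - card (Finset.image f Finset.univ), divided by N^M, equals M - N + N * ((N-1)/N)^M (as real numbers). That is, the expected number of hash collisions among M independent uniform draws from a set of size N is C = M - N + N((N-1)/N)^M. -/

import Mathlib

/-! Count collisions through distinct values: the expected size of the image of `f` is a sum over
`b : Fin N` of the probability that `b` is hit, and `b` is missed by exactly `(N - 1) ^ M` of the
`N ^ M` functions. -/

open Finset

section CountingFunctions

variable {α β : Type*} [Fintype α] [DecidableEq α] [Fintype β] [DecidableEq β]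

theorem card_filter_forall_ne (b : β) :
    #{f : α → β | ∀ a, f a ≠ b} = (Fintype.card β - 1) ^ Fintype.card α := by
  rw [← Fintype.card_subtype, Fintype.card_congr (Equiv.subtypePiEquivPi (p := fun _ x => x ≠ b))]
  simp [Fintype.card_pi]

theorem cast_card_filter_mem_image {R : Type*} [CommRing R] (b : β) :
    (#{f : α → β | b ∈ image f univ} : R)
      = (Fintype.card β : R) ^ Fintype.card α - ((Fintype.card β : R) - 1) ^ Fintype.card α := by
  have hβ : 1 ≤ Fintype.card β := Fintype.card_pos_iff.2 ⟨b⟩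
  have hsplit := card_filter_add_card_filter_not (s := univ) (p := fun f : α → β => b ∈ image f univ)
  have hmiss : #{f : α → β | b ∉ image f univ} = (Fintype.card β - 1) ^ Fintype.card α := by
    rw [← card_filter_forall_ne b]
    congr 1
    ext f
    simp [eq_comm]
  rw [hmiss, card_univ, Fintype.card_fun] at hsplit
  rw [eq_sub_iff_add_eq]
  exact_mod_cast congrArg (Nat.cast : ℕ → R) hsplit

theorem sum_cast_card_image {R : Type*} [CommRing R] :
    ∑ f : α → β, (#(image f univ) : R)
      = Fintype.card β *
          ((Fintype.card β : R) ^ Fintype.card α - ((Fintype.card β : R) - 1) ^ Fintype.card α) := by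
  calc ∑ f : α → β, (#(image f univ) : R)
      = ∑ f : α → β, ∑ b, if b ∈ image f univ then (1 : R) else 0 := by
        simp [sum_boole]
    _ = ∑ b : β, (#{f : α → β | b ∈ image f univ} : R) := by
        rw [sum_comm]
        simp [sum_boole]
    _ = _ := by
        simp only [cast_card_filter_mem_image, sum_const, card_univ, nsmul_eq_mul]

end CountingFunctions

/-- Equation (3) of the paper: the expected number of collisions among `M`
independent uniform draws from a set of size `N` is `M - N + N*((N-1)/N)^M`. -/
theorem expected_collisions (N M : ℕ) (hN : 0 < N) :
    (∑ f : Fin M → Fin N, ((M - (Finset.image f Finset.univ).card : ℕ) : ℝ)) / (N : ℝ) ^ M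
      = (M : ℝ) - N + N * (((N : ℝ) - 1) / N) ^ M := by
  have hsum : ∑ f : Fin M → Fin N, ((M - #(image f univ) : ℕ) : ℝ)
      = (N : ℝ) ^ M * M - N * ((N : ℝ) ^ M - ((N : ℝ) - 1) ^ M) := by
    simp_rw [Nat.cast_sub (card_image_le.trans_eq (card_fin M)), sum_sub_distrib,
      sum_cast_card_image, sum_const, card_univ, Fintype.card_fun, Fintype.card_fin, nsmul_eq_mul,
      Nat.cast_pow]
  have hN' : (N : ℝ) ≠ 0 := Nat.cast_ne_zero.mpr hN.ne'
  rw [hsum, div_pow]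
  field_simp
  ring
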